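/- arXiv:1211.0175 — 2 statements merged into one kernel-verified Lean document; each statement's English description precedes it below -/
import Mathlib

section
/- For the binary reflected Gray code and any index i with 0 <= i < d: the elements of RGC^d whose i-th bit equals 0, with that bit deleted, form exactly the sequence RGC^{d-1} in order; and for 0 <= i < d-1, the elements whose i-th bit equals 1, with that bit deleted, form exactly the sequence RGC^{d-1} with bit i complemented in each element, in order. -/
/-- The binary reflected Gray code word of a bit string `w` (most significant bit
first): bit `i` of the Gray code is the XOR of bits `i` and `i-1` of `w`, with the
convention that the bit at index `-1` is `0`. -/
def gray2 (w : List ℕ) : List ℕ :=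
  (List.range w.length).map
    (fun i => (w.getD i 0 + if i = 0 then 0 else w.getD (i - 1) 0) % 2)

/-- `mirror i w` complements (`x ↦ 1 - x`) the bit of `w` at index `i`. -/
def mirror (i : ℕ) (w : List ℕ) : List ℕ := w.set i (1 - w.getD i 0)

/-- The `d`-digit base-`b` representation of `n` (most significant digit first). -/
def digitsBE (b : ℕ) : ℕ → ℕ → List ℕ
  | 0, _ => []
  | d + 1, n => digitsBE b d (n / b) ++ [n % b]

/-- The binary reflected Gray code as a sequence of all `2^d` binary `d`-bit words. -/
def graySeq (d : ℕ) : List (List ℕ) :=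
  (List.range (2 ^ d)).map (fun r => gray2 (digitsBE 2 d r))

/-!
`RGC^{d+1}` is `RGC^d` prefixed by `0`, followed by the reversal of `RGC^d` prefixed by `1`;
and reversing `RGC^d` amounts to complementing bit `0` of every word. Reduction commutes with
concatenation and reversal, and with prefixing when the index is at least `1`, so reducing
`RGC^{d+1}` at bit `i + 1` gives the reflection of the reduction of `RGC^d` at bit `i`. This
recursion on `i` ends at bit `0`, where reduction just selects one of the two halves.
-/

lemma digitsBE_succ (b d n : ℕ) :
    digitsBE b (d + 1) n = (n / b ^ d % b) :: digitsBE b d (n % b ^ d) := by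
  induction d generalizing n with
  | zero => simp [digitsBE]
  | succ d ih =>
    have hdiv : n / b / b ^ d = n / b ^ (d + 1) := by
      rw [Nat.div_div_eq_div_mul, pow_succ']
    have hmod : n / b % b ^ d = n % b ^ (d + 1) / b := by
      rw [pow_succ', Nat.mod_mul_right_div_self]
    have hlast : n % b = n % b ^ (d + 1) % b :=
      (Nat.mod_mod_of_dvd n (dvd_pow_self b d.succ_ne_zero)).symm
    rw [digitsBE, ih, hdiv, hmod, hlast]
    rfl

lemma mirror_zero_cons (b : ℕ) (w : List ℕ) : mirror 0 (b :: w) = (1 - b) :: w := by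
  simp [mirror]

lemma mirror_succ_cons (i b : ℕ) (w : List ℕ) : mirror (i + 1) (b :: w) = b :: mirror i w := by
  simp [mirror]

lemma mirror_mirror {i : ℕ} {w : List ℕ} (h : w.getD i 0 ≤ 1) :
    mirror i (mirror i w) = w := by
  unfold mirror
  rcases lt_or_ge i w.length with hi | hi
  · simp only [List.set_set, List.getD_eq_getElem?_getD, List.getElem?_set_self hi,
      List.getElem?_eq_getElem hi, Option.getD_some] at h ⊢
    rw [Nat.sub_sub_self h, List.set_getElem_self]
  · simp [List.set_eq_of_length_le hi]

lemma getD_gray2_le_one (w : List ℕ) (i : ℕ) : (gray2 w).getD i 0 ≤ 1 := by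
  rw [List.getD_eq_getElem?_getD]
  rcases h : (gray2 w)[i]? with _ | x
  · simp
  · simp only [gray2, List.getElem?_map, Option.map_eq_some_iff] at h
    obtain ⟨j, -, rfl⟩ := h
    simp only [Option.getD_some]
    omega

lemma gray2_cons (b : ℕ) (w : List ℕ) :
    gray2 (b :: w) = (b % 2) ::
      (List.range w.length).map
        (fun i => (w.getD i 0 + if i = 0 then b else w.getD (i - 1) 0) % 2) := by
  simp only [gray2, List.length_cons, List.range_succ_eq_map, List.map_cons, List.map_map]
  congr 1
  refine List.map_congr_left fun i _ => ?_
  rcases i with _ | i <;> simp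

lemma gray2_zero_cons (w : List ℕ) : gray2 (0 :: w) = 0 :: gray2 w := by
  rw [gray2_cons]
  rfl

lemma gray2_one_cons (w : List ℕ) : gray2 (1 :: w) = 1 :: mirror 0 (gray2 w) := by
  rw [gray2_cons]
  rcases w with _ | ⟨a, w⟩
  · simp [gray2, mirror]
  · simp only [gray2, mirror, List.length_cons, List.range_succ_eq_map, List.map_cons,
      List.map_map, List.getD_cons_zero, List.set_cons_zero, if_true]
    congr 2
    omega

lemma graySeq_succ_eq_map_mirror (d : ℕ) :
    graySeq (d + 1) = (graySeq d).map (0 :: ·) ++ (graySeq d).map (fun w => 1 :: mirror 0 w) := by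
  unfold graySeq
  rw [pow_succ, mul_two, List.range_add, List.map_append, List.map_map, List.map_map, List.map_map]
  congr 1
  · refine List.map_congr_left fun r hr => ?_
    have hr : r < 2 ^ d := List.mem_range.mp hr
    simp only [Function.comp_apply, digitsBE_succ, Nat.div_eq_of_lt hr, Nat.mod_eq_of_lt hr,
      Nat.zero_mod, gray2_zero_cons]
  · refine List.map_congr_left fun r hr => ?_
    have hr : r < 2 ^ d := List.mem_range.mp hr
    have hhigh : (2 ^ d + r) / 2 ^ d % 2 = 1 := by
      rw [Nat.add_div_left _ (Nat.two_pow_pos d), Nat.div_eq_of_lt hr]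
    simp only [Function.comp_apply, digitsBE_succ, hhigh, Nat.add_mod_left, Nat.mod_eq_of_lt hr,
      gray2_one_cons]

lemma mirror_zero_mirror_zero_of_mem_graySeq {d : ℕ} {w : List ℕ} (hw : w ∈ graySeq d) :
    mirror 0 (mirror 0 w) = w := by
  obtain ⟨r, -, rfl⟩ := List.mem_map.mp hw
  exact mirror_mirror (getD_gray2_le_one _ 0)

theorem graySeq_reverse (d : ℕ) : (graySeq d).reverse = (graySeq d).map (mirror 0) := by
  induction d with
  | zero => rfl
  | succ d ih =>
    rw [graySeq_succ_eq_map_mirror, List.reverse_append, ← List.map_reverse, ← List.map_reverse,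
      ih, List.map_append, List.map_map, List.map_map, List.map_map, List.map_map]
    congr 1
    refine List.map_congr_left fun w hw => ?_
    simp [mirror_zero_cons, mirror_zero_mirror_zero_of_mem_graySeq hw]

def reflect (L : List (List ℕ)) : List (List ℕ) :=
  L.map (0 :: ·) ++ L.reverse.map (1 :: ·)

theorem graySeq_succ (d : ℕ) : graySeq (d + 1) = reflect (graySeq d) := by
  rw [graySeq_succ_eq_map_mirror, reflect, graySeq_reverse, List.map_map]
  rfl

lemma map_mirror_succ_reflect (i : ℕ) (L : List (List ℕ)) :
    (reflect L).map (mirror (i + 1)) = reflect (L.map (mirror i)) := by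
  simp [reflect, Function.comp_def, mirror_succ_cons]

-- The paper's reduction operator.
def bitReduce (i v : ℕ) (L : List (List ℕ)) : List (List ℕ) :=
  (L.filter (fun w => w.getD i 0 = v)).map (·.eraseIdx i)

section bitReduce

variable (i v : ℕ) (L : List (List ℕ))

lemma bitReduce_append (M : List (List ℕ)) :
    bitReduce i v (L ++ M) = bitReduce i v L ++ bitReduce i v M := by
  simp [bitReduce]

lemma bitReduce_reverse : bitReduce i v L.reverse = (bitReduce i v L).reverse := by
  simp [bitReduce]

lemma bitReduce_succ_map_cons (b : ℕ) :
    bitReduce (i + 1) v (L.map (b :: ·)) = (bitReduce i v L).map (b :: ·) := by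
  simp [bitReduce, List.filter_map, Function.comp_def]

lemma bitReduce_zero_map_cons_self : bitReduce 0 v (L.map (v :: ·)) = L := by
  simp [bitReduce, List.filter_map, Function.comp_def]

lemma bitReduce_zero_map_cons_of_ne {b : ℕ} (h : b ≠ v) :
    bitReduce 0 v (L.map (b :: ·)) = [] := by
  simp [bitReduce, List.filter_map, Function.comp_def, h]

lemma bitReduce_succ_reflect : bitReduce (i + 1) v (reflect L) = reflect (bitReduce i v L) := by
  rw [reflect, reflect, bitReduce_append, bitReduce_succ_map_cons, bitReduce_succ_map_cons,
    bitReduce_reverse]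

lemma bitReduce_zero_zero_reflect : bitReduce 0 0 (reflect L) = L := by
  rw [reflect, bitReduce_append, bitReduce_zero_map_cons_self,
    bitReduce_zero_map_cons_of_ne _ _ one_ne_zero, List.append_nil]

lemma bitReduce_zero_one_reflect : bitReduce 0 1 (reflect L) = L.reverse := by
  rw [reflect, bitReduce_append, bitReduce_zero_map_cons_of_ne _ _ zero_ne_one,
    bitReduce_zero_map_cons_self, List.nil_append]

end bitReduce

theorem bitReduce_zero_graySeq_succ :
    ∀ {d i : ℕ}, i ≤ d → bitReduce i 0 (graySeq (d + 1)) = graySeq d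
  | _, 0, _ => by rw [graySeq_succ, bitReduce_zero_zero_reflect]
  | d + 1, i + 1, h => by
    rw [graySeq_succ, bitReduce_succ_reflect, bitReduce_zero_graySeq_succ (by omega), graySeq_succ]

theorem bitReduce_one_graySeq_succ :
    ∀ {d i : ℕ}, i < d → bitReduce i 1 (graySeq (d + 1)) = (graySeq d).map (mirror i)
  | _, 0, _ => by rw [graySeq_succ, bitReduce_zero_one_reflect, graySeq_reverse]
  | d + 1, i + 1, h => by
    rw [graySeq_succ, bitReduce_succ_reflect, bitReduce_one_graySeq_succ (by omega), graySeq_succ,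
      map_mirror_succ_reflect]

theorem binary_rgc_reduction_general (d : ℕ) :
    (∀ i < d,
      ((graySeq d).filter (fun w => w.getD i 0 = 0)).map (fun w => w.eraseIdx i)
        = graySeq (d - 1)) ∧
    (∀ i < d - 1,
      ((graySeq d).filter (fun w => w.getD i 0 = 1)).map (fun w => w.eraseIdx i)
        = (graySeq (d - 1)).map (mirror i)) := by
  cases d with
  | zero => simp
  | succ d =>
    exact ⟨fun i hi => bitReduce_zero_graySeq_succ (by omega),
      fun i hi => bitReduce_one_graySeq_succ (by omega)⟩

/-- For the binary reflected Gray code and any index `i < d`: the elements of `RGC^d`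
whose `i`-th bit equals `0`, with that bit deleted, form exactly the sequence
`RGC^{d-1}` in order; and for `i < d-1`, the elements whose `i`-th bit equals `1`,
with that bit deleted, form exactly the sequence `RGC^{d-1}` with bit `i`
complemented in each element, in order. -/
theorem binary_rgc_reduction (d : ℕ) (hd : 2 ≤ d) :
    (∀ i < d,
      ((graySeq d).filter (fun w => w.getD i 0 = 0)).map (fun w => w.eraseIdx i)
        = graySeq (d - 1)) ∧
    (∀ i < d - 1,
      ((graySeq d).filter (fun w => w.getD i 0 = 1)).map (fun w => w.eraseIdx i)
        = (graySeq (d - 1)).map (mirror i)) :=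
  binary_rgc_reduction_general d
end

section
/- In the Meurthe curve permutation function, deleting a coordinate is compatible with the permutations: let r be a d-digit ternary number, i an index, and r' = take_i(r) the (d-1)-digit ternary number obtained by removing digit i. Then take_i(a(r)) = a'(r'), where a and a' denote the Meurthe permutations in dimensions d and d-1 respectively. -/
/-- The value sequence of the inverse of the Meurthe permutation of a `(n+1)`-digit
ternary number `r`: it is obtained from the identity permutation `(0, 1, ..., n)` by
moving all indices `h` with `r h ∈ {0, 1}` to the front and reversing their order,
the indices `h` with `r h = 2` keeping their relative order at the back. -/
def meurtheInvList (n : ℕ) (r : Fin (n + 1) → Fin 3) : List (Fin (n + 1)) :=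
  ((List.finRange (n + 1)).filter (fun h => r h ≠ 2)).reverse
    ++ (List.finRange (n + 1)).filter (fun h => r h = 2)

/-!
Write `L` for the list `meurtheInvList (n + 1) r`, i.e. the value sequence of `a⁻¹`, so that
`a x` is the position of `x` in `L`. Since `Fin.succAbove i` is an order embedding onto the
complement of `i`, relabelling the list of the shortened number `r ∘ i.succAbove` along it gives
`L` with the entry `i` deleted, i.e. `L` with position `a i` erased. Erasing a position of a
duplicate-free list moves the later entries down by one and keeps the earlier ones in place.
-/

namespace List

theorem map_succAbove_finRange (n : ℕ) (i : Fin (n + 1)) :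
    (finRange n).map i.succAbove = (finRange (n + 1)).filter (· ≠ i) :=
  Pairwise.eq_of_mem_iff (r := (· < ·))
    ((pairwise_lt_finRange n).map _ fun _ _ => (Fin.strictMono_succAbove i ·))
    ((pairwise_lt_finRange _).filter _)
    fun x => by simp [Fin.exists_succAbove_eq_iff]

theorem map_succAbove_filter_finRange (n : ℕ) (i : Fin (n + 1)) (p : Fin (n + 1) → Bool) :
    ((finRange n).filter (fun t => p (i.succAbove t))).map i.succAbove
      = ((finRange (n + 1)).filter p).filter (· ≠ i) := by
  rw [filter_comm, ← map_succAbove_finRange, filter_map]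
  rfl

theorem Nodup.eraseIdx_eq_filter_ne {α : Type*} [DecidableEq α] {l : List α} (hl : l.Nodup)
    {m : ℕ} {x : α} (hm : l[m]? = some x) : l.eraseIdx m = l.filter (· ≠ x) := by
  obtain ⟨hlt, rfl⟩ := getElem?_eq_some_iff.mp hm
  rw [← hl.erase_getElem m hlt, hl.erase_eq_filter]
  grind

theorem Nodup.index_eq_of_getElem?_eraseIdx {α : Type*} {l : List α} (hl : l.Nodup)
    {m k k' : ℕ} {x : α} (hk : l[k]? = some x) (hk' : (l.eraseIdx m)[k']? = some x) :
    k' = if k < m then k else k - 1 := by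
  have hklt : k < l.length := (getElem?_eq_some_iff.mp hk).1
  have hinj : ∀ {p}, l[p]? = some x → k = p := fun hp =>
    (getElem?_inj hklt hl).mp (hk.trans hp.symm)
  rw [getElem?_eraseIdx] at hk'
  split_ifs at hk' with hlt
  · obtain rfl := hinj hk'
    rw [if_pos hlt]
  · obtain rfl := hinj hk'
    rw [if_neg (by omega)]
    omega

end List

theorem meurtheInvList_perm_finRange (n : ℕ) (r : Fin (n + 1) → Fin 3) :
    (meurtheInvList n r).Perm (List.finRange (n + 1)) := by
  refine ((List.reverse_perm _).append_right _).trans ?_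
  refine List.Perm.trans ?_ (List.filter_append_perm (fun h => decide (r h ≠ 2)) _)
  simp

theorem nodup_meurtheInvList (n : ℕ) (r : Fin (n + 1) → Fin 3) : (meurtheInvList n r).Nodup :=
  (meurtheInvList_perm_finRange n r).nodup_iff.mpr (List.nodup_finRange _)

theorem map_succAbove_meurtheInvList (n : ℕ) (r : Fin (n + 2) → Fin 3) (i : Fin (n + 2)) :
    (meurtheInvList n (fun t => r (i.succAbove t))).map i.succAbove
      = (meurtheInvList (n + 1) r).filter (· ≠ i) := by
  simp only [meurtheInvList, List.map_append, List.map_reverse, List.filter_append,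
    List.filter_reverse, ← List.map_succAbove_filter_finRange (n + 1) i (fun h => r h ≠ 2),
    ← List.map_succAbove_filter_finRange (n + 1) i (fun h => r h = 2)]

/-- Deleting a coordinate is compatible with the Meurthe permutations.  Let `r` be a
`d`-digit ternary number (`d = n + 2`), `i` an index, and `r' = take_i(r)` the
`(d-1)`-digit ternary number obtained by removing digit `i` (so
`r' j = r (i.succAbove j)`).  Let `a` and `a'` be the Meurthe permutations of `r` and
`r'` in dimensions `d` and `d - 1` (characterized by their inverses, as sequences
obtained from the identity by moving all indices `h` with `r_h ∈ {0,1}` to the front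
and reversing their order).  Then `take_i(a(r)) = a'(r')`: deleting entry `a_i` from
the value sequence of `a` and decreasing by one every remaining entry exceeding `a_i`
yields exactly `a'`. -/
theorem meurthe_permutation_take_coordinate
    (n : ℕ) (r : Fin (n + 2) → Fin 3) (i : Fin (n + 2))
    (a : Equiv.Perm (Fin (n + 2))) (a' : Equiv.Perm (Fin (n + 1)))
    (ha : ∀ j : Fin (n + 2),
      (meurtheInvList (n + 1) r)[(j : ℕ)]? = some (a.symm j))
    (ha' : ∀ j : Fin (n + 1),
      (meurtheInvList n (fun t => r (i.succAbove t)))[(j : ℕ)]? = some (a'.symm j)) :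
    ∀ j : Fin (n + 1), (a' j : ℕ) =
      if (a (i.succAbove j) : ℕ) < (a i : ℕ)
      then (a (i.succAbove j) : ℕ)
      else (a (i.succAbove j) : ℕ) - 1 := by
  intro j
  have hpos : ∀ x, (meurtheInvList (n + 1) r)[(a x : ℕ)]? = some x := fun x => by
    simpa using ha (a x)
  have hpos' : (meurtheInvList n (fun t => r (i.succAbove t)))[(a' j : ℕ)]? = some j := by
    simpa using ha' (a' j)
  have hnodup := nodup_meurtheInvList (n + 1) r
  have herase : (meurtheInvList n (fun t => r (i.succAbove t))).map i.succAbove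
      = (meurtheInvList (n + 1) r).eraseIdx (a i) := by
    rw [map_succAbove_meurtheInvList, hnodup.eraseIdx_eq_filter_ne (hpos i)]
  refine hnodup.index_eq_of_getElem?_eraseIdx (hpos _) ?_
  rw [← herase, List.getElem?_map, hpos', Option.map_some]
end
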